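/- Given an internal category in the category of groups with source s, target t : C₁ → C₀ and identity i : C₀ → C₁, the set K = ker(s) together with the restriction of t to K and the conjugation action of C₀ on K via i forms a crossed module (K, C₀, t|_K). -/
import Mathlib


/-- For an internal category in Grp, (ker s, C₀, t|) with the conjugation action
p • k = i(p) * k * i(p)⁻¹ is a crossed module. -/
theorem internalCat_ker_crossedModule {C₀ C₁ : Type*} [Group C₀] [Group C₁]
    (s t : C₁ →* C₀) (i : C₀ →* C₁)
    (s_i : ∀ x, s (i x) = x) (t_i : ∀ x, t (i x) = x)
    (m : ∀ f g : C₁, s f = t g → C₁)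
    (m_mul : ∀ (f g f' g' : C₁) (h : s f = t g) (h' : s f' = t g')
        (h'' : s (f * f') = t (g * g')), m (f * f') (g * g') h'' = m f g h * m f' g' h')
    (m_id_left : ∀ g : C₁, m (i (t g)) g (s_i (t g)) = g)
    (m_id_right : ∀ f : C₁, m f (i (s f)) ((t_i (s f)).symm) = f) :
    (∀ (p : C₀) (k : C₁), s k = 1 → s (i p * k * (i p)⁻¹) = 1) ∧
    (∀ (p : C₀) (k : C₁), s k = 1 → t (i p * k * (i p)⁻¹) = p * t k * p⁻¹) ∧
    (∀ (k k' : C₁), s k = 1 → s k' = 1 → i (t k) * k' * (i (t k))⁻¹ = k * k' * k⁻¹) := by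
  have m_congr : ∀ (f f' g g' : C₁) (_ : f = f') (_ : g = g')
      (h : s f = t g) (h' : s f' = t g'), m f g h = m f' g' h' := by
    rintro f _ g _ rfl rfl h h'; rfl
  have m_id_left' : ∀ (g : C₁) (h : s (i (t g)) = t g), m (i (t g)) g h = g :=
    fun g h => m_id_left g
  have m_id_right' : ∀ (f : C₁) (h : s f = t (i (s f))), m f (i (s f)) h = f :=
    fun f h => m_id_right f
  have m_one_left : ∀ (g : C₁) (h : s (1 : C₁) = t g), m 1 g h = g := by
    intro g h
    have ht : t g = 1 := by simpa using h.symm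
    have e : (1 : C₁) = i (t g) := by rw [ht, map_one]
    rw [m_congr 1 (i (t g)) g g e rfl h (s_i (t g))]
    exact m_id_left g
  have m_one_right : ∀ (f : C₁) (h : s f = t (1 : C₁)), m f 1 h = f := by
    intro f h
    have hs : s f = 1 := by simpa using h
    have e : (1 : C₁) = i (s f) := by rw [hs, map_one]
    rw [m_congr f f 1 (i (s f)) rfl e h ((t_i (s f)).symm)]
    exact m_id_right f
  have key : ∀ (f g : C₁) (h : s f = t g),
      f * ((i (s f))⁻¹ * g) = g * ((i (t g))⁻¹ * f) := by
    intro f g h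
    have h1 : s f = t (i (s f)) := (t_i (s f)).symm
    have h2 : s (1 : C₁) = t ((i (s f))⁻¹ * g) := by
      simp [map_mul, s_i, t_i, ← h]
    have hA : s (f * 1) = t (i (s f) * ((i (s f))⁻¹ * g)) := by
      simpa using h
    have h3 : s (i (t g)) = t g := s_i (t g)
    have h4 : s ((i (t g))⁻¹ * f) = t (1 : C₁) := by
      simp [map_mul, s_i, h]
    have hB : s (i (t g) * ((i (t g))⁻¹ * f)) = t (g * 1) := by
      simpa using h
    have eA : m f g h = f * ((i (s f))⁻¹ * g) := by
      rw [m_congr f (f * 1) g (i (s f) * ((i (s f))⁻¹ * g)) (by group) (by group) h hA,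
        m_mul f (i (s f)) 1 ((i (s f))⁻¹ * g) h1 h2 hA,
        m_id_right' f h1, m_one_left _ h2]
    have eB : m f g h = g * ((i (t g))⁻¹ * f) := by
      rw [m_congr f (i (t g) * ((i (t g))⁻¹ * f)) g (g * 1) (by group) (by group) h hB,
        m_mul (i (t g)) g ((i (t g))⁻¹ * f) 1 h3 h4 hB,
        m_id_left' g h3, m_one_right _ h4]
    rw [← eA, eB]
  refine ⟨?_, ?_, ?_⟩
  · intro p k hk; simp [map_mul, s_i, hk]
  · intro p k hk; simp [map_mul, t_i, mul_assoc]
  · intro k k' hk hk'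
    have h : s (i (t k) * k') = t k := by simp [map_mul, s_i, hk']
    have := key (i (t k) * k') k h
    have hs : s (i (t k) * k') = t k := h
    rw [hs] at this
    -- this : (i (t k) * k') * ((i (t k))⁻¹ * k) = k * ((i (t k))⁻¹ * (i (t k) * k'))
    have : i (t k) * k' * (i (t k))⁻¹ * k = k * k' := by
      simpa [mul_assoc] using this
    calc i (t k) * k' * (i (t k))⁻¹ = (k * k') * k⁻¹ := by
          rw [← this]; group
      _ = k * k' * k⁻¹ := by group
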